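/- Let [ḡ] be a bounded subset of ℝ^m with m = p·(n+2)+1, and let k ≥ 0 be an integer. If [ḡ] is a convex subset of ℝ^m, then the set Supp([ḡ]) ∩ C^k, consisting of those functions in Supp([ḡ]) that are k-times continuously differentiable on [-1,0], is a convex subset of the real vector space of functions from [-1,0] to ℝ. -/

import Mathlib

/-! Everything in a minimal representation depends linearly on `g` on the open grid cells: the
Taylor coefficients `g^{[k]}((-i·h)⁺)` exactly, and the remainder ranges up to the inclusion
`B(a g + b f) ⊆ a B(g) + b B(f)` of intervals (for `a, b ≥ 0`, infima only go up and suprema only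
go down under combination). Hence `minRep (a g + b f) ⊆ a • minRep g + b • minRep f`, which lies
in `[ḡ]` by convexity; `C^n_p` and `C^k` are closed under linear combinations. -/

open Set Filter Topology

noncomputable section

/-- Finite-dimensional coefficient space isomorphic to `ℝ^m`, `m = p·(n+2)+1`:
the value at `0`, the Taylor coefficients `g^{[k]}((-i·h)⁺)` for `1 ≤ i ≤ p`, `0 ≤ k ≤ n`
(indexed here by `i : Fin p` standing for the grid point `-(i+1)·h`), and the `p` remainders. -/
abbrev PNRep (p n : ℕ) : Type := ℝ × (Fin p → Fin (n + 1) → ℝ) × (Fin p → ℝ)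

/-- The left endpoint `-(i+1)·h` (with `h = 1/p`) of the `i`-th grid subinterval. -/
def gridPt (p : ℕ) (i : Fin p) : ℝ := -((i : ℝ) + 1) * (1 / p)

/-- The class `C^n_p`: on each grid subinterval `(-(i+1)h, -(i+1)h + h)`, `g` is `(n+1)`-times
differentiable, all right limits `g⁽ᵏ⁾((-(i+1)h)⁺)`, `k ≤ n+1`, exist, and `g⁽ⁿ⁺¹⁾` is
continuous and bounded there. -/
def IsCnp (p n : ℕ) (g : ℝ → ℝ) : Prop :=
  ∀ i : Fin p,
    (∀ k ≤ n, ∀ t ∈ Ioo (gridPt p i) (gridPt p i + 1 / p),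
        DifferentiableAt ℝ (iteratedDeriv k g) t) ∧
    (∀ k ≤ n + 1, ∃ dk : ℝ,
        Tendsto (fun ξ => iteratedDeriv k g (gridPt p i + ξ)) (𝓝[>] (0 : ℝ)) (𝓝 dk)) ∧
    ContinuousOn (iteratedDeriv (n + 1) g) (Ioo (gridPt p i) (gridPt p i + 1 / p)) ∧
    ∃ C : ℝ, ∀ t ∈ Ioo (gridPt p i) (gridPt p i + 1 / p), |iteratedDeriv (n + 1) g t| ≤ C

/-- The right limit `g⁽ᵏ⁾(a⁺)` divided by `k!`, i.e. the Taylor coefficient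
`g^{[k]}(a⁺)` (defined via `limUnder`; meaningful when the limit exists). -/
def rightCoeff (g : ℝ → ℝ) (k : ℕ) (a : ℝ) : ℝ :=
  limUnder (𝓝[>] (0 : ℝ)) (fun ξ => iteratedDeriv k g (a + ξ)) / (Nat.factorial k : ℝ)

/-- The range of the `(n+1)`-st Taylor coefficient `g^{[n+1]}` on the open `i`-th subinterval. -/
def remainderRange (p n : ℕ) (g : ℝ → ℝ) (i : Fin p) : Set ℝ :=
  (fun ξ => iteratedDeriv (n + 1) g (gridPt p i + ξ) / (Nat.factorial (n + 1) : ℝ)) ''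
    Ioo (0 : ℝ) (1 / p)

/-- The minimal `(p,n)`-representation `{a} × B` of `g`: the coefficient vector is uniquely
determined, and the remainder components range over
`[inf g^{[n+1]}, sup g^{[n+1]}]` on each subinterval. -/
def minRep (p n : ℕ) (g : ℝ → ℝ) : Set (PNRep p n) :=
  {x : PNRep p n |
    x.1 = g 0 ∧
    (∀ i : Fin p, ∀ k : Fin (n + 1), x.2.1 i k = rightCoeff g k (gridPt p i)) ∧
    (∀ i : Fin p,
      x.2.2 i ∈ Icc (sInf (remainderRange p n g i)) (sSup (remainderRange p n g i)))}

/-- The support of a set `[ḡ] ⊆ ℝ^m`: all `g ∈ C^n_p` whose minimal `(p,n)`-representation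
is contained in `[ḡ]`. -/
def Supp (p n : ℕ) (G : Set (PNRep p n)) : Set (ℝ → ℝ) :=
  {g : ℝ → ℝ | IsCnp p n g ∧ minRep p n g ⊆ G}

open Pointwise

theorem Icc_mul_add_mul_subset {a b l₁ u₁ l₂ u₂ : ℝ} (h₁ : l₁ ≤ u₁) (h₂ : l₂ ≤ u₂) :
    Icc (a * l₁ + b * l₂) (a * u₁ + b * u₂) ⊆ a • Icc l₁ u₁ + b • Icc l₂ u₂ :=
  (((convex_Icc l₁ u₁).smul a).add ((convex_Icc l₂ u₂).smul b)).ordConnected.out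
    (add_mem_add (smul_mem_smul_set (left_mem_Icc.2 h₁)) (smul_mem_smul_set (left_mem_Icc.2 h₂)))
    (add_mem_add (smul_mem_smul_set (right_mem_Icc.2 h₁)) (smul_mem_smul_set (right_mem_Icc.2 h₂)))

theorem Icc_sInf_sSup_subset_smul_add_smul {S T U : Set ℝ} {a b : ℝ} (ha : 0 ≤ a) (hb : 0 ≤ b)
    (hS : S.Nonempty) (hS' : Bornology.IsBounded S) (hT : T.Nonempty)
    (hT' : Bornology.IsBounded T) (hU : U.Nonempty) (hUST : U ⊆ a • S + b • T) :
    Icc (sInf U) (sSup U) ⊆ a • Icc (sInf S) (sSup S) + b • Icc (sInf T) (sSup T) := by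
  have hST : Bornology.IsBounded (a • S + b • T) := isBounded_add (hS'.smul₀ a) (hT'.smul₀ b)
  calc Icc (sInf U) (sSup U)
      ⊆ Icc (sInf (a • S + b • T)) (sSup (a • S + b • T)) :=
        Icc_subset_Icc (csInf_le_csInf hST.bddBelow hU hUST) (csSup_le_csSup hST.bddAbove hU hUST)
    _ = Icc (a * sInf S + b * sInf T) (a * sSup S + b * sSup T) := by
        rw [csInf_add (hS.smul_set) (hS'.smul₀ a).bddBelow (hT.smul_set) (hT'.smul₀ b).bddBelow,
          csSup_add (hS.smul_set) (hS'.smul₀ a).bddAbove (hT.smul_set) (hT'.smul₀ b).bddAbove,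
          Real.sInf_smul_of_nonneg ha, Real.sInf_smul_of_nonneg hb, Real.sSup_smul_of_nonneg ha,
          Real.sSup_smul_of_nonneg hb, smul_eq_mul, smul_eq_mul, smul_eq_mul, smul_eq_mul]
    _ ⊆ a • Icc (sInf S) (sSup S) + b • Icc (sInf T) (sSup T) :=
        Icc_mul_add_mul_subset (csInf_le_csSup hS hS'.bddBelow hS'.bddAbove)
          (csInf_le_csSup hT hT'.bddBelow hT'.bddAbove)

theorem iteratedDeriv_smul_add_smul_of_isOpen {s : Set ℝ} (hs : IsOpen s) {g f : ℝ → ℝ} {n : ℕ}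
    (hg : ∀ k ≤ n, ∀ t ∈ s, DifferentiableAt ℝ (iteratedDeriv k g) t)
    (hf : ∀ k ≤ n, ∀ t ∈ s, DifferentiableAt ℝ (iteratedDeriv k f) t) (a b : ℝ) :
    ∀ k ≤ n + 1, ∀ t ∈ s,
      iteratedDeriv k (a • g + b • f) t = a * iteratedDeriv k g t + b * iteratedDeriv k f t := by
  intro k
  induction k with
  | zero => simp
  | succ k ih =>
    intro hk t ht
    have hk' : k ≤ n := Nat.lt_succ_iff.mp hk
    have hev : iteratedDeriv k (a • g + b • f) =ᶠ[𝓝 t]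
        fun x => a * iteratedDeriv k g x + b * iteratedDeriv k f x := by
      filter_upwards [hs.mem_nhds ht] with x hx
      exact ih (by omega) x hx
    rw [iteratedDeriv_succ, hev.deriv_eq,
      deriv_fun_add ((hg k hk' t ht).const_mul a) ((hf k hk' t ht).const_mul b),
      deriv_const_mul a (hg k hk' t ht), deriv_const_mul b (hf k hk' t ht),
      ← iteratedDeriv_succ, ← iteratedDeriv_succ]

section GridCells

variable {p n : ℕ} {g f : ℝ → ℝ} {a b : ℝ}

theorem gridPt_add_mem_Ioo {i : Fin p} {ξ : ℝ} (hξ : ξ ∈ Ioo (0 : ℝ) (1 / p)) :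
    gridPt p i + ξ ∈ Ioo (gridPt p i) (gridPt p i + 1 / p) :=
  ⟨by linarith [hξ.1], by linarith [hξ.2]⟩

theorem eventually_gridPt_add_mem_Ioo (i : Fin p) :
    ∀ᶠ ξ in 𝓝[>] (0 : ℝ), gridPt p i + ξ ∈ Ioo (gridPt p i) (gridPt p i + 1 / p) := by
  have : (0 : ℝ) < 1 / p := by have := i.pos; positivity
  filter_upwards [Ioo_mem_nhdsGT this] with ξ hξ using gridPt_add_mem_Ioo hξ

theorem remainderRange_nonempty (i : Fin p) : (remainderRange p n g i).Nonempty :=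
  (nonempty_Ioo.2 (by have := i.pos; positivity)).image _

namespace IsCnp

theorem iteratedDeriv_smul_add_smul (hg : IsCnp p n g) (hf : IsCnp p n f) (i : Fin p)
    {k : ℕ} (hk : k ≤ n + 1) {t : ℝ} (ht : t ∈ Ioo (gridPt p i) (gridPt p i + 1 / p)) :
    iteratedDeriv k (a • g + b • f) t = a * iteratedDeriv k g t + b * iteratedDeriv k f t :=
  iteratedDeriv_smul_add_smul_of_isOpen isOpen_Ioo (hg i).1 (hf i).1 a b k hk t ht

theorem tendsto_iteratedDeriv_smul_add_smul (hg : IsCnp p n g) (hf : IsCnp p n f) (i : Fin p)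
    {k : ℕ} (hk : k ≤ n + 1) {dg df : ℝ}
    (hdg : Tendsto (fun ξ => iteratedDeriv k g (gridPt p i + ξ)) (𝓝[>] 0) (𝓝 dg))
    (hdf : Tendsto (fun ξ => iteratedDeriv k f (gridPt p i + ξ)) (𝓝[>] 0) (𝓝 df)) :
    Tendsto (fun ξ => iteratedDeriv k (a • g + b • f) (gridPt p i + ξ)) (𝓝[>] 0)
      (𝓝 (a * dg + b * df)) := by
  refine ((hdg.const_mul a).add (hdf.const_mul b)).congr' ?_
  filter_upwards [eventually_gridPt_add_mem_Ioo i] with ξ hξ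
  exact (hg.iteratedDeriv_smul_add_smul hf i hk hξ).symm

theorem smul_add_smul (hg : IsCnp p n g) (hf : IsCnp p n f) (a b : ℝ) :
    IsCnp p n (a • g + b • f) := by
  intro i
  obtain ⟨hg_diff, hg_lim, hg_cont, Cg, hg_bdd⟩ := hg i
  obtain ⟨hf_diff, hf_lim, hf_cont, Cf, hf_bdd⟩ := hf i
  have hcomb {k : ℕ} (hk : k ≤ n + 1) {t : ℝ} (ht : t ∈ Ioo (gridPt p i) (gridPt p i + 1 / p)) :
      iteratedDeriv k (a • g + b • f) t = a * iteratedDeriv k g t + b * iteratedDeriv k f t :=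
    hg.iteratedDeriv_smul_add_smul hf i hk ht
  refine ⟨fun k hk t ht => ?_, fun k hk => ?_, ?_, ⟨|a| * Cg + |b| * Cf, fun t ht => ?_⟩⟩
  · have hev : (fun x => a * iteratedDeriv k g x + b * iteratedDeriv k f x)
        =ᶠ[𝓝 t] iteratedDeriv k (a • g + b • f) := by
      filter_upwards [isOpen_Ioo.mem_nhds ht] with x hx
      exact (hcomb (by omega) hx).symm
    exact (((hg_diff k hk t ht).const_mul a).add
      ((hf_diff k hk t ht).const_mul b)).congr_of_eventuallyEq hev.symm
  · obtain ⟨dg, hdg⟩ := hg_lim k hk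
    obtain ⟨df, hdf⟩ := hf_lim k hk
    exact ⟨_, hg.tendsto_iteratedDeriv_smul_add_smul hf i hk hdg hdf⟩
  · exact ((continuousOn_const.mul hg_cont).add (continuousOn_const.mul hf_cont)).congr
      fun t ht => hcomb le_rfl ht
  · rw [hcomb le_rfl ht]
    calc |a * iteratedDeriv (n + 1) g t + b * iteratedDeriv (n + 1) f t|
        ≤ |a| * |iteratedDeriv (n + 1) g t| + |b| * |iteratedDeriv (n + 1) f t| :=
          (abs_add_le _ _).trans_eq (by rw [abs_mul, abs_mul])
      _ ≤ |a| * Cg + |b| * Cf := by gcongr; exacts [hg_bdd t ht, hf_bdd t ht]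

theorem rightCoeff_smul_add_smul (hg : IsCnp p n g) (hf : IsCnp p n f) (i : Fin p) {k : ℕ}
    (hk : k ≤ n + 1) :
    rightCoeff (a • g + b • f) k (gridPt p i)
      = a * rightCoeff g k (gridPt p i) + b * rightCoeff f k (gridPt p i) := by
  obtain ⟨dg, hdg⟩ := (hg i).2.1 k hk
  obtain ⟨df, hdf⟩ := (hf i).2.1 k hk
  rw [rightCoeff, rightCoeff, rightCoeff,
    (hg.tendsto_iteratedDeriv_smul_add_smul hf i hk hdg hdf).limUnder_eq, hdg.limUnder_eq,
    hdf.limUnder_eq]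
  ring

theorem isBounded_remainderRange (hg : IsCnp p n g) (i : Fin p) :
    Bornology.IsBounded (remainderRange p n g i) := by
  obtain ⟨-, -, -, C, hC⟩ := hg i
  refine isBounded_iff_forall_norm_le.2 ⟨C / (n + 1).factorial, ?_⟩
  rintro _ ⟨ξ, hξ, rfl⟩
  rw [Real.norm_eq_abs, abs_div, Nat.abs_cast]
  gcongr
  exact hC _ (gridPt_add_mem_Ioo hξ)

theorem remainderRange_smul_add_smul_subset (hg : IsCnp p n g) (hf : IsCnp p n f) (i : Fin p) :
    remainderRange p n (a • g + b • f) i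
      ⊆ a • remainderRange p n g i + b • remainderRange p n f i := by
  rintro _ ⟨ξ, hξ, rfl⟩
  have hsplit : iteratedDeriv (n + 1) (a • g + b • f) (gridPt p i + ξ) / (n + 1).factorial
      = a • (iteratedDeriv (n + 1) g (gridPt p i + ξ) / (n + 1).factorial)
        + b • (iteratedDeriv (n + 1) f (gridPt p i + ξ) / (n + 1).factorial) := by
    rw [hg.iteratedDeriv_smul_add_smul hf i le_rfl (gridPt_add_mem_Ioo hξ), smul_eq_mul,
      smul_eq_mul]
    ring
  beta_reduce
  rw [hsplit]
  exact add_mem_add (smul_mem_smul_set ⟨ξ, hξ, rfl⟩) (smul_mem_smul_set ⟨ξ, hξ, rfl⟩)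

end IsCnp

end GridCells

theorem minRep_smul_add_smul_subset {p n : ℕ} {g f : ℝ → ℝ} {a b : ℝ} (hg : IsCnp p n g)
    (hf : IsCnp p n f) (ha : 0 ≤ a) (hb : 0 ≤ b) :
    minRep p n (a • g + b • f) ⊆ a • minRep p n g + b • minRep p n f := by
  rintro ⟨x₀, c, r⟩ ⟨hx₀, hc, hr⟩
  dsimp only at hx₀ hc hr
  have hr_split (i : Fin p) : ∃ u ∈ Icc (sInf (remainderRange p n g i))
      (sSup (remainderRange p n g i)), ∃ v ∈ Icc (sInf (remainderRange p n f i))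
      (sSup (remainderRange p n f i)), a * u + b * v = r i := by
    obtain ⟨_, ⟨u, hu, rfl⟩, _, ⟨v, hv, rfl⟩, huv⟩ := Icc_sInf_sSup_subset_smul_add_smul ha hb
      (remainderRange_nonempty i) (hg.isBounded_remainderRange i) (remainderRange_nonempty i)
      (hf.isBounded_remainderRange i) (remainderRange_nonempty i)
      (hg.remainderRange_smul_add_smul_subset hf i) (hr i)
    exact ⟨u, hu, v, hv, huv⟩
  choose u hu v hv huv using hr_split
  let y : PNRep p n := (g 0, fun i k => rightCoeff g k (gridPt p i), u)
  let z : PNRep p n := (f 0, fun i k => rightCoeff f k (gridPt p i), v)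
  refine ⟨a • y, smul_mem_smul_set ⟨rfl, fun _ _ => rfl, hu⟩,
    b • z, smul_mem_smul_set ⟨rfl, fun _ _ => rfl, hv⟩, ?_⟩
  refine Prod.ext ?_ (Prod.ext (funext₂ fun i k => ?_) (funext fun i => ?_))
  · simp [y, z, hx₀]
  · simp [y, z, hc, hg.rightCoeff_smul_add_smul hf i (k := k) (by omega)]
  · simp [y, z, ← huv]

theorem supp_inter_ck_convex_general (p n k : ℕ)
    (G : Set (PNRep p n))
    (hconv : Convex ℝ G) :
    Convex ℝ (Supp p n G ∩ {g : ℝ → ℝ | ContDiffOn ℝ k g (Icc (-1 : ℝ) 0)}) := by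
  rintro g ⟨⟨hg, hgG⟩, hg_smooth⟩ f ⟨⟨hf, hfG⟩, hf_smooth⟩ a b ha hb hab
  refine ⟨⟨hg.smul_add_smul hf a b, ?_⟩, (hg_smooth.const_smul a).add (hf_smooth.const_smul b)⟩
  calc minRep p n (a • g + b • f)
      ⊆ a • minRep p n g + b • minRep p n f := minRep_smul_add_smul_subset hg hf ha hb
    _ ⊆ a • G + b • G := add_subset_add (smul_set_mono hgG) (smul_set_mono hfG)
    _ ⊆ G := hconv.set_combo_subset ha hb hab

/-- If a bounded `(p,n)`-representation `[ḡ] ⊆ ℝ^m`, `m = p(n+2)+1`, is convex,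
then `Supp([ḡ]) ∩ C^k` (the functions in the support that are `k`-times continuously
differentiable on `[-1,0]`) is a convex subset of the space of functions. -/
theorem supp_inter_ck_convex (p n k : ℕ) (hp : 0 < p)
    (G : Set (PNRep p n))
    (hG : Bornology.IsBounded G) (hconv : Convex ℝ G) :
    Convex ℝ (Supp p n G ∩ {g : ℝ → ℝ | ContDiffOn ℝ k g (Icc (-1 : ℝ) 0)}) :=
  supp_inter_ck_convex_general p n k G hconv
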